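/- Let D be a classical relative entropy. Then for any three probability vectors p, q, r of the same dimension, D(p||q) ≤ D(p||r) + D_max(r||q), where D_max(r||q) = log_2 min{t ≥ 0 : t q_x ≥ r_x for all x}. -/

import Mathlib

/-!
Let `t = 2 ^ D_max(r‖q)`, so that `r ≤ t q`. For `t > 1` the channel that outputs `x` on `(x, 0)`
and samples from `(t q - r) / (t - 1)` on `(x, 1)` maps `p ⊗ e₀ ↦ p` and `r ⊗ (1/t, 1 - 1/t) ↦ q`;
data processing and additivity give `D(p‖q) ≤ D(p‖r) + D(e₀‖(1/t, 1 - 1/t))`. The same channel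
construction on tensor powers shows `n D(e₀‖(1/t, 1 - 1/t)) ≤ D(e₀^{⊗k}‖u^{⊗k}) = k` whenever
`t ^ n ≤ 2 ^ k`, where normalization fixes `D(e₀‖u) = 1` for `u` uniform; letting `k / n → log₂ t`
bounds the last term by `log₂ t`.
-/

open scoped BigOperators

def IsProbVec {ι : Type} [Fintype ι] (p : ι → ℝ) : Prop :=
  (∀ i, 0 ≤ p i) ∧ ∑ i, p i = 1

def IsStochastic {α β : Type} [Fintype α] [Fintype β] (E : Matrix α β ℝ) : Prop :=
  (∀ i j, 0 ≤ E i j) ∧ ∀ j, ∑ i, E i j = 1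

def kron {m n : ℕ} (p : Fin m → ℝ) (q : Fin n → ℝ) : Fin (m * n) → ℝ :=
  fun i => p (finProdFinEquiv.symm i).1 * q (finProdFinEquiv.symm i).2

-- `D_max(r‖q) = log₂ min {t ≥ 0 : t q ≥ r}`, `⊤` if `supp r ⊄ supp q`.
open Classical in
noncomputable def DmaxCl {n : ℕ} (r q : Fin n → ℝ) : EReal :=
  if ∃ t : ℝ, 0 ≤ t ∧ ∀ x, r x ≤ t * q x
  then ((Real.logb 2 (sInf {t : ℝ | 0 ≤ t ∧ ∀ x, r x ≤ t * q x}) : ℝ) : EReal)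
  else ⊤

open Finset Matrix

lemma sum_mul_kron {m n : ℕ} (g : Fin (m * n) → ℝ) (p : Fin m → ℝ) (q : Fin n → ℝ) :
    ∑ c, g c * kron p q c = ∑ x, ∑ y, g (finProdFinEquiv (x, y)) * (p x * q y) := by
  rw [← finProdFinEquiv.sum_comp, Fintype.sum_prod_type]
  simp [kron]

lemma kron_finProdFinEquiv {m n : ℕ} (p : Fin m → ℝ) (q : Fin n → ℝ) (x : Fin m) (y : Fin n) :
    kron p q (finProdFinEquiv (x, y)) = p x * q y := by
  simp [kron]

lemma IsProbVec.kron {m n : ℕ} {p : Fin m → ℝ} {q : Fin n → ℝ} (hp : IsProbVec p)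
    (hq : IsProbVec q) : IsProbVec (kron p q) := by
  refine ⟨fun c => mul_nonneg (hp.1 _) (hq.1 _), ?_⟩
  rw [← finProdFinEquiv.sum_comp, Fintype.sum_prod_type]
  simp only [kron_finProdFinEquiv, ← mul_sum, ← sum_mul, hp.2, hq.2, one_mul]

lemma kron_single {m n : ℕ} (i : Fin m) (j : Fin n) :
    kron (Pi.single i 1) (Pi.single j 1) = Pi.single (finProdFinEquiv (i, j)) (1 : ℝ) := by
  ext c
  obtain ⟨⟨x, y⟩, rfl⟩ := finProdFinEquiv.surjective c
  rw [kron_finProdFinEquiv]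
  by_cases hx : x = i <;> by_cases hy : y = j <;> simp [hx, hy]

lemma kron_apply_zero {m n : ℕ} [NeZero m] [NeZero n] (p : Fin m → ℝ) (q : Fin n → ℝ) :
    kron p q 0 = p 0 * q 0 := by
  have : finProdFinEquiv ((0 : Fin m), (0 : Fin n)) = 0 := Fin.ext (by simp)
  rw [← this, kron_finProdFinEquiv]

-- Only for numerals is `Fin (n * 1)` definitionally `Fin n`.
lemma kron_const_one_right (v : Fin 2 → ℝ) : kron v (fun _ : Fin 1 => 1) = v := by
  ext i
  simp only [kron, mul_one]
  congr 1
  ext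
  simp [finProdFinEquiv]

lemma isProbVec_single {n : ℕ} (i : Fin n) : IsProbVec (Pi.single i (1 : ℝ)) :=
  ⟨fun j => by by_cases h : j = i <;> simp [h], by simp⟩

lemma isProbVec_vecCons {s : ℝ} (h₀ : 0 ≤ s) (h₁ : s ≤ 1) : IsProbVec ![s, 1 - s] :=
  ⟨fun i => by fin_cases i <;> simp [h₀, h₁], by simp⟩

lemma isProbVec_half : IsProbVec ![(1 : ℝ) / 2, 1 / 2] :=
  ⟨fun i => by fin_cases i <;> norm_num, by norm_num⟩

lemma isProbVec_const_one : IsProbVec (fun _ : Fin 1 => (1 : ℝ)) :=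
  ⟨fun _ => zero_le_one, by simp⟩

lemma single_zero_eq_vecCons : (Pi.single 0 1 : Fin 2 → ℝ) = ![1, 0] := by
  ext i
  fin_cases i <;> rfl

def tpow {m : ℕ} (v : Fin m → ℝ) : (k : ℕ) → Fin (m ^ k) → ℝ
  | 0 => fun _ => 1
  | k + 1 => kron (tpow v k) v

lemma IsProbVec.tpow {m : ℕ} {v : Fin m → ℝ} (hv : IsProbVec v) (k : ℕ) :
    IsProbVec (tpow v k) := by
  induction k with
  | zero => exact isProbVec_const_one
  | succ k ih => exact ih.kron hv

lemma tpow_apply_zero {m : ℕ} [NeZero m] (v : Fin m → ℝ) (k : ℕ) : tpow v k 0 = v 0 ^ k := by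
  induction k with
  | zero => rfl
  | succ k ih =>
    change kron (tpow v k) v (0 : Fin (m ^ k * m)) = _
    rw [kron_apply_zero, ih, pow_succ]

lemma tpow_single_zero {m : ℕ} [NeZero m] (k : ℕ) :
    tpow (Pi.single 0 1 : Fin m → ℝ) k = Pi.single 0 1 := by
  induction k with
  | zero =>
    ext i
    rw [Subsingleton.elim (α := Fin 1) i 0]
    rfl
  | succ k ih =>
    rw [tpow, ih, kron_single]
    congr

def constChannel {m n : ℕ} (v : Fin m → ℝ) : Matrix (Fin m) (Fin n) ℝ := fun i _ => v i

lemma IsProbVec.isStochastic_constChannel {m n : ℕ} {v : Fin m → ℝ} (hv : IsProbVec v) :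
    IsStochastic (constChannel v : Matrix (Fin m) (Fin n) ℝ) :=
  ⟨fun i _ => hv.1 i, fun _ => hv.2⟩

lemma constChannel_mulVec {m n : ℕ} (v : Fin m → ℝ) {w : Fin n → ℝ} (hw : ∑ j, w j = 1) :
    constChannel v *ᵥ w = v := by
  ext i
  simp [constChannel, mulVec, dotProduct, ← mul_sum, hw]

def flagChannel {n m : ℕ} (j₀ : Fin m) (w : Fin n → ℝ) : Matrix (Fin n) (Fin (n * m)) ℝ :=
  fun i c => if (finProdFinEquiv.symm c).2 = j₀
    then (Pi.single (finProdFinEquiv.symm c).1 1 : Fin n → ℝ) i else w i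

lemma IsProbVec.isStochastic_flagChannel {n m : ℕ} (j₀ : Fin m) {w : Fin n → ℝ}
    (hw : IsProbVec w) : IsStochastic (flagChannel j₀ w) := by
  refine ⟨fun i c => ?_, fun c => ?_⟩ <;> unfold flagChannel <;> split_ifs
  · exact (isProbVec_single _).1 i
  · exact hw.1 i
  · exact (isProbVec_single _).2
  · exact hw.2

lemma flagChannel_mulVec_kron {n m : ℕ} (j₀ : Fin m) (w r : Fin n → ℝ) (ν : Fin m → ℝ)
    (hr : ∑ x, r x = 1) (hν : ∑ y, ν y = 1) :
    flagChannel j₀ w *ᵥ kron r ν = ν j₀ • r + (1 - ν j₀) • w := by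
  have hν' : ∑ y ∈ {j₀}ᶜ, ν y = 1 - ν j₀ := by
    rw [← hν, Fintype.sum_eq_add_sum_compl j₀, add_sub_cancel_left]
  ext i
  have column_sum : ∀ x, ∑ y, flagChannel j₀ w i (finProdFinEquiv (x, y)) * (r x * ν y) =
      ν j₀ * (Pi.single x 1 : Fin n → ℝ) i * r x + (1 - ν j₀) * w i * r x := by
    intro x
    rw [Fintype.sum_eq_add_sum_compl j₀, ← hν', sum_mul, sum_mul]
    simp only [flagChannel, Equiv.symm_apply_apply, if_pos]
    congr 1
    · ring
    · refine sum_congr rfl fun y hy => ?_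
      rw [if_neg (by simpa using hy)]
      ring
  simp only [mulVec, dotProduct, sum_mul_kron, column_sum, sum_add_distrib, ← mul_sum, hr]
  simp [Pi.single_apply]

lemma flagChannel_mulVec_kron_single {n m : ℕ} (j₀ : Fin m) (w : Fin n → ℝ) {p : Fin n → ℝ}
    (hp : ∑ x, p x = 1) : flagChannel j₀ w *ᵥ kron p (Pi.single j₀ 1) = p := by
  rw [flagChannel_mulVec_kron j₀ w p _ hp (isProbVec_single j₀).2]
  simp

lemma EReal.le_coe_of_forall_nsmul_le_ceil {x : EReal} {a : ℝ} (ha : 0 ≤ a)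
    (h : ∀ n : ℕ, 0 < n → n • x ≤ ((⌈n * a⌉₊ : ℝ) : EReal)) : x ≤ a := by
  induction x using EReal.rec with
  | bot => exact bot_le
  | top =>
    have h₁ := h 1 one_pos
    rw [one_nsmul, top_le_iff] at h₁
    exact absurd h₁ (EReal.coe_ne_top _)
  | coe x =>
    rw [EReal.coe_le_coe_iff, le_iff_forall_pos_lt_add]
    intro ε hε
    obtain ⟨n, hn⟩ := exists_nat_one_div_lt hε
    have hx := h (n + 1) n.succ_pos
    rw [← EReal.coe_nsmul, EReal.coe_le_coe_iff] at hx
    have hceil := Nat.ceil_lt_add_one (by positivity : 0 ≤ ((n + 1 : ℕ) : ℝ) * a)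
    simp only [_root_.nsmul_eq_mul] at hx
    push_cast at hx hceil
    rw [div_lt_iff₀ (by positivity)] at hn
    nlinarith

lemma exists_dmaxCl_eq {n : ℕ} {r q : Fin n → ℝ} (hr : IsProbVec r) (hq : IsProbVec q)
    (h : ∃ t : ℝ, 0 ≤ t ∧ ∀ x, r x ≤ t * q x) :
    ∃ t : ℝ, 1 ≤ t ∧ (∀ x, r x ≤ t * q x) ∧ DmaxCl r q = Real.logb 2 t := by
  set S := {t : ℝ | 0 ≤ t ∧ ∀ x, r x ≤ t * q x}
  have hS : IsClosed S := by
    simp only [S, Set.ofPred_and, Set.ofPred_forall]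
    exact (isClosed_le continuous_const continuous_id).inter
      (isClosed_iInter fun x => isClosed_le continuous_const (by fun_prop))
  obtain ⟨-, hmem⟩ : sInf S ∈ S := hS.csInf_mem h ⟨0, fun _ ht => ht.1⟩
  refine ⟨sInf S, ?_, hmem, if_pos h⟩
  have := sum_le_sum fun x (_ : x ∈ univ) => hmem x
  rwa [hr.2, ← mul_sum, hq.2, mul_one] at this

namespace RelEntropy

def DataProcessing (D : ∀ n : ℕ, (Fin n → ℝ) → (Fin n → ℝ) → EReal) : Prop :=
  ∀ (n m : ℕ) (p q : Fin n → ℝ) (E : Matrix (Fin m) (Fin n) ℝ),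
    IsProbVec p → IsProbVec q → IsStochastic E → D m (E *ᵥ p) (E *ᵥ q) ≤ D n p q

def Additive (D : ∀ n : ℕ, (Fin n → ℝ) → (Fin n → ℝ) → EReal) : Prop :=
  ∀ (n m : ℕ) (p q : Fin n → ℝ) (p' q' : Fin m → ℝ),
    IsProbVec p → IsProbVec q → IsProbVec p' → IsProbVec q' →
    D (n * m) (kron p p') (kron q q') = D n p q + D m p' q'

def Normalized (D : ∀ n : ℕ, (Fin n → ℝ) → (Fin n → ℝ) → EReal) : Prop :=
  D 2 ![1, 0] ![1/2, 1/2] = 1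

variable {D : ∀ n : ℕ, (Fin n → ℝ) → (Fin n → ℝ) → EReal}

-- `1 = D(e₀ ‖ u) = D(e₀ ⊗ 1 ‖ u ⊗ 1) = 1 + D(1 ‖ 1)`
lemma one_one_eq_zero (hA : Additive D) (hN : Normalized D) :
    D 1 (fun _ => 1) (fun _ => 1) = 0 := by
  have h := hA 2 1 ![1, 0] ![1/2, 1/2] (fun _ => 1) (fun _ => 1)
    (single_zero_eq_vecCons ▸ isProbVec_single 0) isProbVec_half
    isProbVec_const_one isProbVec_const_one
  rw [kron_const_one_right, kron_const_one_right, hN] at h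
  generalize D 1 (fun _ => 1) (fun _ => 1) = x at h ⊢
  induction x using EReal.rec with
  | bot => exact absurd h (EReal.coe_ne_bot 1)
  | top => exact absurd h (EReal.coe_ne_top 1)
  | coe x =>
    have : (1 : ℝ) = 1 + x := by exact_mod_cast h
    simp only [EReal.coe_eq_zero]
    linarith

lemma self_le (hD : DataProcessing D) {m n : ℕ} {v : Fin m → ℝ} {p q : Fin n → ℝ}
    (hv : IsProbVec v) (hp : IsProbVec p) (hq : IsProbVec q) : D m v v ≤ D n p q := by
  simpa only [constChannel_mulVec v hp.2, constChannel_mulVec v hq.2] using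
    hD n m p q (constChannel v) hp hq hv.isStochastic_constChannel

lemma nonneg (hD : DataProcessing D) (hA : Additive D) (hN : Normalized D) {n : ℕ}
    {p q : Fin n → ℝ} (hp : IsProbVec p) (hq : IsProbVec q) : 0 ≤ D n p q :=
  one_one_eq_zero hA hN ▸ self_le hD isProbVec_const_one hp hq

lemma self_eq_zero (hD : DataProcessing D) (hA : Additive D) (hN : Normalized D) {n : ℕ}
    {p : Fin n → ℝ} (hp : IsProbVec p) : D n p p = 0 :=
  le_antisymm ((self_le hD hp isProbVec_const_one isProbVec_const_one).trans_eq
    (one_one_eq_zero hA hN)) (nonneg hD hA hN hp hp)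

lemma tpow_eq_nsmul (hA : Additive D) (hN : Normalized D) {m : ℕ} {p q : Fin m → ℝ}
    (hp : IsProbVec p) (hq : IsProbVec q) (k : ℕ) :
    D (m ^ k) (tpow p k) (tpow q k) = k • D m p q := by
  induction k with
  | zero => exact (one_one_eq_zero hA hN).trans (zero_nsmul _).symm
  | succ k ih => rw [succ_nsmul, ← ih]; exact hA _ _ _ _ _ _ (hp.tpow k) (hq.tpow k) hp hq

/-- If `ν j₀ • r ≤ q`, the channel `flagChannel j₀ w` with `w ∝ q - ν j₀ • r` sends
`p ⊗ e_{j₀}` to `p` and `r ⊗ ν` to `q`. -/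
lemma le_add_single (hD : DataProcessing D) (hA : Additive D) {n m : ℕ} {p q r : Fin n → ℝ}
    {ν : Fin m → ℝ} (hp : IsProbVec p) (hq : IsProbVec q) (hr : IsProbVec r) (hν : IsProbVec ν)
    (j₀ : Fin m) (hν₁ : ν j₀ < 1) (hrq : ∀ x, ν j₀ * r x ≤ q x) :
    D n p q ≤ D n p r + D m (Pi.single j₀ 1) ν := by
  have hν₁' : 0 < 1 - ν j₀ := sub_pos.mpr hν₁
  set w : Fin n → ℝ := (1 - ν j₀)⁻¹ • (q - ν j₀ • r)
  have hw : IsProbVec w := by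
    refine ⟨fun x => ?_, ?_⟩
    · simpa [w] using mul_nonneg (inv_nonneg.mpr hν₁'.le) (sub_nonneg.mpr (hrq x))
    · simp [w, ← mul_sum, sum_sub_distrib, hq.2, hr.2, inv_mul_cancel₀ hν₁'.ne']
  have hE := hD _ _ _ _ (flagChannel j₀ w) (hp.kron (isProbVec_single j₀)) (hr.kron hν)
    (hw.isStochastic_flagChannel j₀)
  rw [flagChannel_mulVec_kron_single j₀ w hp.2, flagChannel_mulVec_kron j₀ w r ν hr.2 hν.2,
    hA _ _ _ _ _ _ hp hr (isProbVec_single j₀) hν] at hE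
  convert hE
  ext x
  simp [w, smul_smul, mul_inv_cancel₀ hν₁'.ne']

/-- `le_add_single` with `p = r = e₀` on `2 ^ n` points and `ν` uniform on `2 ^ k` points: the
hypothesis `ν 0 • e₀ ≤ (t⁻¹, 1 - t⁻¹)^{⊗n}` is `2⁻ᵏ ≤ t⁻ⁿ`. -/
lemma nsmul_single_le (hD : DataProcessing D) (hA : Additive D) (hN : Normalized D) {t : ℝ}
    (ht : 1 < t) {n k : ℕ} (hk : 0 < k) (htk : t ^ n ≤ 2 ^ k) :
    n • D 2 (Pi.single 0 1) ![t⁻¹, 1 - t⁻¹] ≤ ((k : ℝ) : EReal) := by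
  have hu : IsProbVec ![t⁻¹, 1 - t⁻¹] :=
    isProbVec_vecCons (by positivity) (inv_le_one_of_one_le₀ ht.le)
  have he : IsProbVec (Pi.single 0 1 : Fin 2 → ℝ) := isProbVec_single 0
  have hν₀ : tpow ![(1 : ℝ) / 2, 1 / 2] k 0 = (1 / 2) ^ k := by simp [tpow_apply_zero]
  have hν₁ : tpow ![(1 : ℝ) / 2, 1 / 2] k 0 < 1 :=
    hν₀ ▸ pow_lt_one₀ (by norm_num) (by norm_num) hk.ne'
  have hrq : ∀ i, tpow ![(1 : ℝ) / 2, 1 / 2] k 0 * (Pi.single 0 1 : Fin (2 ^ n) → ℝ) i ≤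
      tpow ![t⁻¹, 1 - t⁻¹] n i := by
    intro i
    rcases eq_or_ne i 0 with rfl | hi
    · simpa [tpow_apply_zero] using inv_anti₀ (by positivity) htk
    · simpa [hi] using (hu.tpow n).1 i
  calc n • D 2 (Pi.single 0 1) ![t⁻¹, 1 - t⁻¹]
      = D (2 ^ n) (Pi.single 0 1) (tpow ![t⁻¹, 1 - t⁻¹] n) := by
        rw [← tpow_eq_nsmul hA hN he hu, tpow_single_zero]
    _ ≤ D (2 ^ n) (Pi.single 0 1) (Pi.single 0 1) +
        D (2 ^ k) (Pi.single 0 1) (tpow ![1 / 2, 1 / 2] k) :=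
        le_add_single hD hA (isProbVec_single 0) (hu.tpow n) (isProbVec_single 0)
          (isProbVec_half.tpow k) 0 hν₁ hrq
    _ = k • D 2 (Pi.single 0 1) ![1 / 2, 1 / 2] := by
        rw [self_eq_zero hD hA hN (isProbVec_single 0), zero_add, ← tpow_single_zero,
          tpow_eq_nsmul hA hN he isProbVec_half]
    _ = ((k : ℝ) : EReal) := by
        rw [single_zero_eq_vecCons, hN, ← EReal.coe_one, ← EReal.coe_nsmul, nsmul_one]

lemma single_le_logb (hD : DataProcessing D) (hA : Additive D) (hN : Normalized D) {t : ℝ}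
    (ht : 1 < t) : D 2 (Pi.single 0 1) ![t⁻¹, 1 - t⁻¹] ≤ Real.logb 2 t := by
  have hlog : 0 < Real.logb 2 t := Real.logb_pos one_lt_two ht
  refine EReal.le_coe_of_forall_nsmul_le_ceil hlog.le fun n hn =>
    nsmul_single_le hD hA hN ht (Nat.ceil_pos.mpr (by positivity)) ?_
  have h : Real.logb 2 (t ^ n) ≤ ⌈n * Real.logb 2 t⌉₊ := by
    rw [Real.logb_pow]
    exact Nat.le_ceil _
  rw [Real.logb_le_iff_le_rpow one_lt_two (by positivity)] at h
  exact_mod_cast h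

end RelEntropy

open RelEntropy

/-- Triangle-type inequality: `D(p‖q) ≤ D(p‖r) + D_max(r‖q)` for any classical
relative entropy `D`. -/
theorem stmt2
    (D : ∀ n : ℕ, (Fin n → ℝ) → (Fin n → ℝ) → EReal)
    (hDPI : ∀ (n m : ℕ) (p q : Fin n → ℝ) (E : Matrix (Fin m) (Fin n) ℝ),
      IsProbVec p → IsProbVec q → IsStochastic E →
      D m (E.mulVec p) (E.mulVec q) ≤ D n p q)
    (hAdd : ∀ (n m : ℕ) (p q : Fin n → ℝ) (p' q' : Fin m → ℝ),
      IsProbVec p → IsProbVec q → IsProbVec p' → IsProbVec q' →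
      D (n * m) (kron p p') (kron q q') = D n p q + D m p' q')
    (hNorm : D 2 ![1, 0] ![1/2, 1/2] = 1) :
    ∀ (n : ℕ) (p q r : Fin n → ℝ), IsProbVec p → IsProbVec q → IsProbVec r →
      D n p q ≤ D n p r + DmaxCl r q := by
  intro n p q r hp hq hr
  by_cases hS : ∃ t : ℝ, 0 ≤ t ∧ ∀ x, r x ≤ t * q x
  · obtain ⟨t, ht₁, hrt, hDmax⟩ := exists_dmaxCl_eq hr hq hS
    rw [hDmax]
    rcases ht₁.eq_or_lt with rfl | ht₁
    · have hrq : r = q := funext fun x =>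
        (sum_eq_sum_iff_of_le fun x _ => by simpa using hrt x).mp (hr.2.trans hq.2.symm) x
          (mem_univ x)
      simp [hrq]
    · have hu : IsProbVec ![t⁻¹, 1 - t⁻¹] :=
        isProbVec_vecCons (by positivity) (inv_le_one_of_one_le₀ ht₁.le)
      calc D n p q ≤ D n p r + D 2 (Pi.single 0 1) ![t⁻¹, 1 - t⁻¹] :=
            le_add_single hDPI hAdd hp hq hr hu 0 (inv_lt_one_of_one_lt₀ ht₁)
              fun x => (inv_mul_le_iff₀ (by positivity)).mpr (hrt x)
        _ ≤ D n p r + Real.logb 2 t := add_le_add le_rfl (single_le_logb hDPI hAdd hNorm ht₁)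
  · have hpr : D n p r ≠ ⊥ := (EReal.bot_lt_zero.trans_le (nonneg hDPI hAdd hNorm hp hr)).ne'
    rw [DmaxCl, if_neg hS, EReal.add_top_of_ne_bot hpr]
    exact le_top
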